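/- arXiv:2301.06109 — 4 statements merged into one kernel-verified Lean document; each statement's English description precedes it below -/
import Mathlib

section
/- For every real u ≥ 1 and integers 0 ≤ m ≤ N, 0 ≤ s ≤ N, if B ~ Binomial(s, m/N) and H ~ Hypergeometric(N, m, s), then E[u^B] ≥ E[u^H]. -/
/-!
Expanding `u ^ a = ∑ k, C(a, k) (u - 1) ^ k` writes `E[u ^ X]` as `∑ k, E[C(X, k)] (u - 1) ^ k`.
The binomial law has `E[C(B, k)] = C(s, k) (m / N) ^ k`, the hypergeometric law has
`E[C(H, k)] = C(m, k) C(N - k, s - k) / C(N, s) = C(s, k) C(m, k) / C(N, k)`, and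
`C(m, k) / C(N, k) = ∏ i < k, (m - i) / (N - i) ≤ (m / N) ^ k`. Since `u - 1 ≥ 0`, the comparison
holds coefficient by coefficient.
-/

open Finset

namespace Nat

theorem sum_choose_mul_choose_mul_choose (m n : ℕ) {k s : ℕ} (hk : k ≤ s) :
    ∑ a ∈ range (s + 1), m.choose a * n.choose (s - a) * a.choose k =
      m.choose k * (m - k + n).choose (s - k) := by
  obtain ⟨j, rfl⟩ := Nat.exists_eq_add_of_le hk
  have below_k : ∑ a ∈ range k, m.choose a * n.choose (k + j - a) * a.choose k = 0 :=
    sum_eq_zero fun a ha => by rw [choose_eq_zero_of_lt (mem_range.1 ha), mul_zero]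
  rw [add_assoc, sum_range_add, below_k, zero_add, add_tsub_cancel_left, add_choose_eq,
    Finset.Nat.sum_antidiagonal_eq_sum_range_succ_mk, mul_sum]
  refine sum_congr rfl fun i _ => ?_
  rw [mul_right_comm, choose_mul (le_add_right k i), add_tsub_cancel_left,
    show k + j - (k + i) = j - i by omega, mul_assoc]

theorem descFactorial_mul_pow_le_pow_mul_descFactorial {m N : ℕ} (h : m ≤ N) (k : ℕ) :
    m.descFactorial k * N ^ k ≤ m ^ k * N.descFactorial k := by
  induction k with
  | zero => simp
  | succ k ih =>
    have step : (m - k) * N ≤ m * (N - k) := by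
      rw [Nat.sub_mul, Nat.mul_sub]
      exact Nat.sub_le_sub_left (by rw [mul_comm k N]; exact Nat.mul_le_mul_right k h) _
    calc m.descFactorial (k + 1) * N ^ (k + 1)
        = ((m - k) * N) * (m.descFactorial k * N ^ k) := by rw [descFactorial_succ]; ring
      _ ≤ (m * (N - k)) * (m ^ k * N.descFactorial k) := Nat.mul_le_mul step ih
      _ = m ^ (k + 1) * N.descFactorial (k + 1) := by rw [descFactorial_succ]; ring

theorem choose_mul_pow_le_pow_mul_choose {m N : ℕ} (h : m ≤ N) (k : ℕ) :
    m.choose k * N ^ k ≤ m ^ k * N.choose k := by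
  have := descFactorial_mul_pow_le_pow_mul_descFactorial h k
  rw [descFactorial_eq_factorial_mul_choose, descFactorial_eq_factorial_mul_choose] at this
  exact Nat.le_of_mul_le_mul_left (by linarith) k.factorial_pos

end Nat

section TaylorAtOne

variable {R : Type*} [CommRing R]

theorem pow_eq_sum_range_choose_mul_sub_one_pow {a n : ℕ} (ha : a ≤ n) (u : R) :
    u ^ a = ∑ k ∈ range (n + 1), (a.choose k : R) * (u - 1) ^ k := by
  calc u ^ a = (u - 1 + 1) ^ a := by rw [sub_add_cancel]
    _ = ∑ k ∈ range (a + 1), (a.choose k : R) * (u - 1) ^ k := by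
      rw [add_pow]
      exact sum_congr rfl fun k _ => by rw [one_pow, mul_one, mul_comm]
    _ = _ := sum_subset (range_subset_range.2 (by omega)) fun k _ hk => by
      rw [Nat.choose_eq_zero_of_lt (by simp at hk; omega), Nat.cast_zero, zero_mul]

theorem sum_mul_pow_eq_sum_mul_sub_one_pow (n : ℕ) (w : ℕ → R) (u : R) :
    ∑ a ∈ range (n + 1), w a * u ^ a =
      ∑ k ∈ range (n + 1), (∑ a ∈ range (n + 1), w a * a.choose k) * (u - 1) ^ k := by
  calc _ = ∑ a ∈ range (n + 1), ∑ k ∈ range (n + 1), w a * a.choose k * (u - 1) ^ k :=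
        sum_congr rfl fun a ha => by
          rw [pow_eq_sum_range_choose_mul_sub_one_pow (mem_range_succ_iff.1 ha), mul_sum]
          simp only [mul_assoc]
    _ = _ := by rw [sum_comm]; simp only [sum_mul]

theorem sum_binomial_mul_pow (s : ℕ) (p u : R) :
    ∑ a ∈ range (s + 1), (s.choose a : R) * p ^ a * (1 - p) ^ (s - a) * u ^ a =
      ∑ k ∈ range (s + 1), (s.choose k : R) * p ^ k * (u - 1) ^ k := by
  calc _ = (p * u + (1 - p)) ^ s := by
        rw [add_pow]; exact sum_congr rfl fun a _ => by ring
    _ = (p * (u - 1) + 1) ^ s := by ring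
    _ = _ := by rw [add_pow]; exact sum_congr rfl fun k _ => by rw [mul_pow]; ring

theorem sum_hypergeometric_mul_pow {m N : ℕ} (hm : m ≤ N) (s : ℕ) (u : R) :
    ∑ a ∈ range (s + 1), (m.choose a : R) * (N - m).choose (s - a) * u ^ a =
      ∑ k ∈ range (s + 1), (m.choose k : R) * (N - k).choose (s - k) * (u - 1) ^ k := by
  rw [sum_mul_pow_eq_sum_mul_sub_one_pow]
  refine sum_congr rfl fun k hk => congrArg (· * (u - 1) ^ k) ?_
  have moment := Nat.sum_choose_mul_choose_mul_choose m (N - m) (mem_range_succ_iff.1 hk)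
  rcases le_or_gt k m with hkm | hmk
  · rw [show m - k + (N - m) = N - k by omega] at moment
    exact_mod_cast congrArg (Nat.cast : ℕ → R) moment
  · rw [Nat.choose_eq_zero_of_lt hmk, zero_mul] at moment
    rw [Nat.choose_eq_zero_of_lt hmk, Nat.cast_zero, zero_mul]
    exact_mod_cast congrArg (Nat.cast : ℕ → R) moment

end TaylorAtOne

theorem choose_div_choose_le_div_pow {m N k : ℕ} (hm : m ≤ N) (hk : k ≤ N) :
    (m.choose k : ℝ) / N.choose k ≤ ((m : ℝ) / N) ^ k := by
  rcases N.eq_zero_or_pos with rfl | hN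
  · obtain rfl : k = 0 := by omega
    simp
  have hNk : (0 : ℝ) < N.choose k := by exact_mod_cast Nat.choose_pos hk
  rw [div_pow, div_le_div_iff₀ hNk (by positivity)]
  exact_mod_cast Nat.choose_mul_pow_le_pow_mul_choose hm k

theorem choose_mul_choose_sub_div_choose_le {m N s k : ℕ} (hm : m ≤ N) (hs : s ≤ N)
    (hk : k ≤ s) :
    (m.choose k : ℝ) * (N - k).choose (s - k) / N.choose s ≤
      s.choose k * ((m : ℝ) / N) ^ k := by
  have hNk : (0 : ℝ) < N.choose k := by exact_mod_cast Nat.choose_pos (hk.trans hs)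
  have hNs : (0 : ℝ) < N.choose s := by exact_mod_cast Nat.choose_pos hs
  have hprod : (N.choose s : ℝ) * s.choose k = N.choose k * (N - k).choose (s - k) := by
    exact_mod_cast Nat.choose_mul hk
  calc (m.choose k : ℝ) * (N - k).choose (s - k) / N.choose s
      = s.choose k * ((m.choose k : ℝ) / N.choose k) := by
        rw [mul_div_assoc', div_eq_div_iff hNs.ne' hNk.ne']
        linear_combination (-(m.choose k : ℝ)) * hprod
    _ ≤ _ := mul_le_mul_of_nonneg_left (choose_div_choose_le_div_pow hm (hk.trans hs))
        (Nat.cast_nonneg _)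

/-- For u ≥ 1, the "moment generating function" E[u^B] of B ~ Binomial(s, m/N)
dominates E[u^H] for H ~ Hypergeometric(N, m, s). -/
theorem binomial_mgf_ge_hypergeometric_mgf
    (N m s : ℕ) (hm : m ≤ N) (hs : s ≤ N) (u : ℝ) (hu : 1 ≤ u) :
    ∑ a ∈ Finset.range (s + 1),
        (s.choose a : ℝ) * ((m : ℝ) / (N : ℝ)) ^ a *
          (1 - (m : ℝ) / (N : ℝ)) ^ (s - a) * u ^ a ≥
      ∑ a ∈ Finset.range (s + 1),
        ((m.choose a : ℝ) * ((N - m).choose (s - a) : ℝ) / (N.choose s : ℝ)) *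
          u ^ a := by
  rw [ge_iff_le, sum_binomial_mul_pow]
  calc ∑ a ∈ range (s + 1), (m.choose a : ℝ) * (N - m).choose (s - a) / N.choose s * u ^ a
      = (∑ a ∈ range (s + 1), (m.choose a : ℝ) * (N - m).choose (s - a) * u ^ a) /
          N.choose s := by
        rw [sum_div]; exact sum_congr rfl fun a _ => div_mul_eq_mul_div _ _ _
    _ = ∑ k ∈ range (s + 1), (m.choose k : ℝ) * (N - k).choose (s - k) / N.choose s *
          (u - 1) ^ k := by
        rw [sum_hypergeometric_mul_pow hm, sum_div]
        exact sum_congr rfl fun k _ => (div_mul_eq_mul_div _ _ _).symm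
    _ ≤ ∑ k ∈ range (s + 1), (s.choose k : ℝ) * ((m : ℝ) / N) ^ k * (u - 1) ^ k :=
        sum_le_sum fun k hk => mul_le_mul_of_nonneg_right
          (choose_mul_choose_sub_div_choose_le hm hs (mem_range_succ_iff.1 hk))
          (pow_nonneg (sub_nonneg.2 hu) k)
end

section
/- Let N ≥ 1, 1 ≤ m ≤ N-1, 0 < α < 1, t ≥ 0. Let V = (V_1,...,V_N) be uniformly distributed on the set of binary vectors with exactly m ones, and independently let P_1,...,P_N be i.i.d. Bernoulli(e^{-αt}) and Q_1,...,Q_N be i.i.d. Bernoulli(e^{-t}), all jointly independent. Define Z_i = V_i P_i + (1 - V_i) Q_i. Then the random vector (Z_1,...,Z_N) is negatively dependent: for every subset A ⊆ {1,...,N}, E[∏_{i∈A} Z_i] ≤ ∏_{i∈A} E[Z_i]. -/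
/-!
Write `a = e^{-αt}` and `b = e^{-t}`, so `0 ≤ b ≤ a`. Given `V`, the `Z_i` are independent with
`E[Z_i | V] = b + (a - b) V_i`, hence `E[∏_{i ∈ A} Z_i] = E[∏_{i ∈ A} (b + (a - b) V_i)]`.
Expanding the product over subsets `B ⊆ A` gives nonnegative coefficients, so it suffices that `V`
itself is negatively dependent, and indeed `E[∏_{i ∈ B} V_i] = m^{(|B|)} / N^{(|B|)}` (falling
factorials) is at most `(m / N)^{|B|} = ∏_{i ∈ B} E[V_i]`.
-/

/-- Probability weight of an outcome `ω = (v, p, q)`: `v` is uniform on binary vectors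
with exactly `m` ones, `p` is a vector of i.i.d. Bernoulli(`a`) variables and `q` a vector
of i.i.d. Bernoulli(`b`) variables, all jointly independent. -/
noncomputable def ehrenfestWeight (N m : ℕ) (a b : ℝ)
    (ω : (Fin N → Bool) × (Fin N → Bool) × (Fin N → Bool)) : ℝ :=
  (if (Finset.univ.filter (fun i => ω.1 i = true)).card = m
    then (1 : ℝ) / (N.choose m : ℝ) else 0) *
  (∏ i, (if ω.2.1 i then a else 1 - a)) *
  (∏ i, (if ω.2.2 i then b else 1 - b))

/-- `Z_i = V_i P_i + (1 - V_i) Q_i` as a real-valued random variable. -/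
def Zval {N : ℕ} (ω : (Fin N → Bool) × (Fin N → Bool) × (Fin N → Bool))
    (i : Fin N) : ℝ :=
  if ω.1 i then (if ω.2.1 i then 1 else 0) else (if ω.2.2 i then 1 else 0)

open Finset Real

def boolFunEquivFinset (ι : Type*) [Fintype ι] [DecidableEq ι] : (ι → Bool) ≃ Finset ι where
  toFun v := univ.filter (v · = true)
  invFun s i := decide (i ∈ s)
  left_inv v := by ext i; simp
  right_inv s := by ext i; simp

theorem Nat.choose_sub_mul_descFactorial {n m j : ℕ} (hjm : j ≤ m) :
    (n - j).choose (m - j) * n.descFactorial j = n.choose m * m.descFactorial j := by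
  rw [Nat.descFactorial_eq_factorial_mul_choose, Nat.descFactorial_eq_factorial_mul_choose]
  calc _ = j.factorial * (n.choose j * (n - j).choose (m - j)) := by ring
    _ = _ := by rw [← Nat.choose_mul hjm]; ring

theorem Nat.descFactorial_mul_pow_le {m n : ℕ} (hmn : m ≤ n) (j : ℕ) :
    m.descFactorial j * n ^ j ≤ n.descFactorial j * m ^ j := by
  induction j with
  | zero => simp
  | succ j ih =>
    have hstep : (m - j) * n ≤ (n - j) * m := by
      rw [Nat.sub_mul, Nat.sub_mul, mul_comm n m]
      exact Nat.sub_le_sub_left (Nat.mul_le_mul_left j hmn) _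
    calc m.descFactorial (j + 1) * n ^ (j + 1) = m.descFactorial j * n ^ j * ((m - j) * n) := by
          rw [Nat.descFactorial_succ, pow_succ]; ring
      _ ≤ n.descFactorial j * m ^ j * ((n - j) * m) := Nat.mul_le_mul ih hstep
      _ = n.descFactorial (j + 1) * m ^ (j + 1) := by rw [Nat.descFactorial_succ, pow_succ]; ring

theorem descFactorial_div_descFactorial_le_div_pow {m n : ℕ} (hmn : m ≤ n) (j : ℕ) :
    (m.descFactorial j : ℝ) / n.descFactorial j ≤ ((m : ℝ) / n) ^ j := by
  rcases (n.descFactorial j).eq_zero_or_pos with hzero | hpos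
  · rw [hzero, Nat.cast_zero, div_zero]
    positivity
  have hpow : (0 : ℝ) < (n : ℝ) ^ j := by
    exact_mod_cast hpos.trans_le (Nat.descFactorial_le_pow n j)
  rw [div_pow, div_le_div_iff₀ (by exact_mod_cast hpos) hpow, mul_comm _ (n.descFactorial j : ℝ)]
  exact_mod_cast Nat.descFactorial_mul_pow_le hmn j

theorem card_filter_powersetCard_univ_subset_mul_descFactorial {ι : Type*} [Fintype ι]
    [DecidableEq ι] (B : Finset ι) (m : ℕ) :
    #((univ.powersetCard m).filter (B ⊆ ·)) * (Fintype.card ι).descFactorial #B =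
      (Fintype.card ι).choose m * m.descFactorial #B := by
  by_cases hBm : #B ≤ m
  · rw [card_filter_powersetCard_subset B univ m (subset_univ B) hBm, card_univ,
      Nat.choose_sub_mul_descFactorial hBm]
  · have hempty : (univ.powersetCard m).filter (B ⊆ ·) = ∅ := by
      refine filter_false_of_mem fun s hs hBs => hBm ?_
      exact (card_le_card hBs).trans (mem_powersetCard.1 hs).2.le
    rw [hempty, card_empty, zero_mul, Nat.descFactorial_eq_zero_iff_lt.2 (not_le.1 hBm),
      mul_zero]

section NegDependent

variable {Ω ι : Type*} [Fintype Ω]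

def NegDependent (w : Ω → ℝ) (X : ι → Ω → ℝ) : Prop :=
  ∀ A : Finset ι, ∑ ω, w ω * ∏ i ∈ A, X i ω ≤ ∏ i ∈ A, ∑ ω, w ω * X i ω

theorem NegDependent.const_add_mul {w : Ω → ℝ} {X : ι → Ω → ℝ} (hX : NegDependent w X)
    (hw : ∑ ω, w ω = 1) {b c : ℝ} (hb : 0 ≤ b) (hc : 0 ≤ c) :
    NegDependent w (fun i ω => b + c * X i ω) := by
  classical
  intro A
  have hexpand : ∀ x : ι → ℝ, ∏ i ∈ A, (b + c * x i) =
      ∑ B ∈ A.powerset, c ^ #B * b ^ #(A \ B) * ∏ i ∈ B, x i := by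
    intro x
    simp_rw [add_comm b, prod_add, prod_mul_distrib, prod_const]
    exact sum_congr rfl fun B _ => by ring
  calc ∑ ω, w ω * ∏ i ∈ A, (b + c * X i ω)
      = ∑ B ∈ A.powerset, c ^ #B * b ^ #(A \ B) * ∑ ω, w ω * ∏ i ∈ B, X i ω := by
        simp_rw [hexpand, mul_sum]
        rw [sum_comm]
        exact sum_congr rfl fun B _ => sum_congr rfl fun ω _ => by ring
    _ ≤ ∑ B ∈ A.powerset, c ^ #B * b ^ #(A \ B) * ∏ i ∈ B, ∑ ω, w ω * X i ω := by
        gcongr with B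
        exact hX B
    _ = ∏ i ∈ A, (b + c * ∑ ω, w ω * X i ω) := (hexpand _).symm
    _ = ∏ i ∈ A, ∑ ω, w ω * (b + c * X i ω) := by
        simp_rw [mul_add, sum_add_distrib, ← sum_mul, hw, mul_left_comm _ c, ← mul_sum, one_mul]

end NegDependent

section Uniform

variable {ι : Type*} [Fintype ι] [DecidableEq ι]

noncomputable def uniformWeight (ι : Type*) [Fintype ι] (m : ℕ) (v : ι → Bool) : ℝ :=
  if #(univ.filter (v · = true)) = m then 1 / ((Fintype.card ι).choose m : ℝ) else 0

theorem sum_uniformWeight_mul_prod_indicator {m : ℕ} (hm : m ≤ Fintype.card ι) (B : Finset ι) :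
    ∑ v, uniformWeight ι m v * ∏ i ∈ B, (if v i then 1 else 0) =
      (m.descFactorial #B : ℝ) / (Fintype.card ι).descFactorial #B := by
  have hcount : ∑ v, uniformWeight ι m v * ∏ i ∈ B, (if v i then 1 else 0) =
      (#((univ.powersetCard m).filter (B ⊆ ·)) : ℝ) / (Fintype.card ι).choose m := by
    rw [Fintype.sum_equiv (boolFunEquivFinset ι) _
      (fun s => (if #s = m ∧ B ⊆ s then 1 else 0) / ((Fintype.card ι).choose m : ℝ))]
    · rw [← sum_div, sum_boole]
      congr 3
      ext s
      simp
    · intro v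
      simp only [uniformWeight, boolFunEquivFinset, Equiv.coe_fn_mk, prod_boole, subset_iff,
        mem_filter, mem_univ, true_and]
      split_ifs <;> simp_all
  have hchoose : ((Fintype.card ι).choose m : ℝ) ≠ 0 := by exact_mod_cast (Nat.choose_pos hm).ne'
  have hdesc : ((Fintype.card ι).descFactorial #B : ℝ) ≠ 0 := by
    exact_mod_cast (Nat.descFactorial_pos.2 (card_le_univ B)).ne'
  rw [hcount, div_eq_div_iff hchoose hdesc, mul_comm (m.descFactorial #B : ℝ)]
  exact_mod_cast card_filter_powersetCard_univ_subset_mul_descFactorial B m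

theorem sum_uniformWeight {m : ℕ} (hm : m ≤ Fintype.card ι) : ∑ v, uniformWeight ι m v = 1 := by
  simpa using sum_uniformWeight_mul_prod_indicator hm ∅

theorem negDependent_uniformWeight {m : ℕ} (hm : m ≤ Fintype.card ι) :
    NegDependent (uniformWeight ι m) (fun i v => if v i then 1 else 0) := by
  intro B
  have hsingle : ∀ i, ∑ v, uniformWeight ι m v * (if v i then 1 else 0) =
      (m : ℝ) / Fintype.card ι := fun i => by
    simpa using sum_uniformWeight_mul_prod_indicator hm {i}
  rw [prod_congr rfl fun i _ => hsingle i, prod_const, sum_uniformWeight_mul_prod_indicator hm]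
  exact descFactorial_div_descFactorial_le_div_pow hm #B

end Uniform

def bernoulliWeight (c : ℝ) (x : Bool) : ℝ := if x then c else 1 - c

theorem ehrenfestWeight_eq (N m : ℕ) (a b : ℝ) (v p q : Fin N → Bool) :
    ehrenfestWeight N m a b (v, p, q) =
      uniformWeight (Fin N) m v * (∏ i, bernoulliWeight a (p i)) *
        ∏ i, bernoulliWeight b (q i) := by
  rw [ehrenfestWeight, uniformWeight, Fintype.card_fin]
  rfl

theorem sum_ehrenfestWeight_mul_prod_Zval (N m : ℕ) (a b : ℝ) (A : Finset (Fin N)) :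
    ∑ ω, ehrenfestWeight N m a b ω * ∏ i ∈ A, Zval ω i =
      ∑ v, uniformWeight (Fin N) m v * ∏ i ∈ A, (b + (a - b) * if v i then 1 else 0) := by
  rw [Fintype.sum_prod_type]
  refine sum_congr rfl fun v _ => ?_
  -- Given `v`, both the weight and `∏ i ∈ A, Zval` factor over coordinates.
  let K (i : Fin N) (x y : Bool) : ℝ := bernoulliWeight a x * bernoulliWeight b y *
    if i ∈ A then (if v i then (if x then 1 else 0) else if y then 1 else 0) else 1
  have hcoord : ∀ i, ∑ x, ∑ y, K i x y =
      if i ∈ A then b + (a - b) * (if v i then 1 else 0) else 1 := by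
    intro i
    by_cases hi : i ∈ A <;> cases hv : v i <;> simp [K, hi, hv, bernoulliWeight] <;> ring
  calc ∑ pq : (Fin N → Bool) × (Fin N → Bool),
        ehrenfestWeight N m a b (v, pq) * ∏ i ∈ A, Zval (v, pq) i
      = ∑ p : Fin N → Bool, ∑ q : Fin N → Bool,
          uniformWeight (Fin N) m v * ∏ i, K i (p i) (q i) := by
        rw [Fintype.sum_prod_type]
        refine sum_congr rfl fun p _ => sum_congr rfl fun q _ => ?_
        simp only [K, ehrenfestWeight_eq, prod_mul_distrib, Fintype.prod_ite_mem, Zval]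
        ring
    _ = uniformWeight (Fin N) m v * ∏ i, ∑ x, ∑ y, K i x y := by
        simp_rw [Fintype.prod_sum, mul_sum]
    _ = _ := by rw [prod_congr rfl fun i _ => hcoord i, Fintype.prod_ite_mem]

theorem sum_ehrenfestWeight_mul_Zval (N m : ℕ) (a b : ℝ) (i : Fin N) :
    ∑ ω, ehrenfestWeight N m a b ω * Zval ω i =
      ∑ v, uniformWeight (Fin N) m v * (b + (a - b) * if v i then 1 else 0) := by
  simpa using sum_ehrenfestWeight_mul_prod_Zval N m a b {i}

theorem negDependent_Zval {N m : ℕ} (hm : m ≤ N) {a b : ℝ} (hb : 0 ≤ b) (hba : b ≤ a) :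
    NegDependent (ehrenfestWeight N m a b) (fun i ω => Zval ω i) := by
  have hm' : m ≤ Fintype.card (Fin N) := by rwa [Fintype.card_fin]
  intro A
  rw [sum_ehrenfestWeight_mul_prod_Zval]
  simp_rw [sum_ehrenfestWeight_mul_Zval]
  exact (negDependent_uniformWeight hm').const_add_mul (sum_uniformWeight hm') hb
    (sub_nonneg.2 hba) A

theorem Z_negatively_dependent_general
    (N m : ℕ) (hm2 : m ≤ N - 1)
    (α t : ℝ) (hα1 : α < 1) (ht : 0 ≤ t)
    (A : Finset (Fin N)) :
    ∑ ω : (Fin N → Bool) × (Fin N → Bool) × (Fin N → Bool),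
        ehrenfestWeight N m (Real.exp (-(α * t))) (Real.exp (-t)) ω *
          ∏ i ∈ A, Zval ω i ≤
      ∏ i ∈ A,
        ∑ ω : (Fin N → Bool) × (Fin N → Bool) × (Fin N → Bool),
          ehrenfestWeight N m (Real.exp (-(α * t))) (Real.exp (-t)) ω * Zval ω i :=
  negDependent_Zval (by omega) (exp_pos _).le (exp_le_exp.2 (by nlinarith)) A

/-- Negative dependence of the vector `(Z_i)`: with `P_i` i.i.d. Bernoulli(e^{-αt}),
`Q_i` i.i.d. Bernoulli(e^{-t}) and `V` uniform over placements of `m` heavy balls,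
for every `A ⊆ [N]` one has `E[∏_{i∈A} Z_i] ≤ ∏_{i∈A} E[Z_i]`. -/
theorem Z_negatively_dependent
    (N m : ℕ) (hN : 1 ≤ N) (hm1 : 1 ≤ m) (hm2 : m ≤ N - 1)
    (α t : ℝ) (hα0 : 0 < α) (hα1 : α < 1) (ht : 0 ≤ t)
    (A : Finset (Fin N)) :
    ∑ ω : (Fin N → Bool) × (Fin N → Bool) × (Fin N → Bool),
        ehrenfestWeight N m (Real.exp (-(α * t))) (Real.exp (-t)) ω *
          ∏ i ∈ A, Zval ω i ≤
      ∏ i ∈ A,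
        ∑ ω : (Fin N → Bool) × (Fin N → Bool) × (Fin N → Bool),
          ehrenfestWeight N m (Real.exp (-(α * t))) (Real.exp (-t)) ω * Zval ω i :=
  Z_negatively_dependent_general N m hm2 α t hα1 ht A
end

section
/- Let X*_1,...,X*_N be i.i.d. Bernoulli(1/2), let (Z_1,...,Z_N) be a {0,1}^N-valued random vector independent of (X*_i) satisfying negative dependence (E[∏_{i∈A} Z_i] ≤ ∏_{i∈A} E[Z_i] for all A ⊆ [N]), and let y ∈ {0,1}^N be deterministic. Define X_i = (1 - Z_i) X*_i + Z_i y_i, let π be the law of (X*_i) and μ the law of (X_i). Then the chi-squared divergence satisfies ‖μ/π − 1‖²_{L²(π)} ≤ ∏_{i=1}^N (1 + E[Z_i]²) − 1. -/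
open Finset

private lemma coord_count_aux (u v b : Bool) :
    ∑ a : Bool, ∑ a' : Bool,
      (if (if u then b else a) = (if v then b else a') then (1:ℝ) else 0)
      = if u ∧ v then 4 else 2 := by
  cases u <;> cases v <;> cases b <;> simp [Fintype.sum_bool] <;> norm_num

private lemma pair_count_aux (N : ℕ) (y z z' : Fin N → Bool) :
    ∑ x : Fin N → Bool, ∑ x' : Fin N → Bool,
      (if (fun i => if z i then y i else x i) = (fun i => if z' i then y i else x' i)
        then (1:ℝ) else 0)
      = ∏ i, (if z i ∧ z' i then (4:ℝ) else 2) := by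
  classical
  have h1 : ∀ x x' : Fin N → Bool,
      (if (fun i => if z i then y i else x i) = (fun i => if z' i then y i else x' i)
        then (1:ℝ) else 0)
      = ∏ i, (if (if z i then y i else x i) = (if z' i then y i else x' i) then (1:ℝ) else 0) := by
    intro x x'
    rw [Fintype.prod_boole]
    simp [funext_iff]
  simp_rw [h1]
  have h2 : ∀ x : Fin N → Bool,
      ∑ x' : Fin N → Bool, ∏ i, (if (if z i then y i else x i) = (if z' i then y i else x' i) then (1:ℝ) else 0)
      = ∏ i, ∑ a' : Bool, (if (if z i then y i else x i) = (if z' i then y i else a') then (1:ℝ) else 0) := by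
    intro x
    rw [Finset.prod_univ_sum, Fintype.piFinset_univ]
  simp_rw [h2]
  rw [show (∑ x : Fin N → Bool, ∏ i, ∑ a' : Bool,
      (if (if z i then y i else x i) = (if z' i then y i else a') then (1:ℝ) else 0))
    = ∏ i, ∑ a : Bool, ∑ a' : Bool,
      (if (if z i then y i else a) = (if z' i then y i else a') then (1:ℝ) else 0) from by
    rw [Finset.prod_univ_sum, Fintype.piFinset_univ]]
  exact Finset.prod_congr rfl fun i _ => coord_count_aux (z i) (z' i) (y i)

private lemma key_identity (N : ℕ) (ζ : (Fin N → Bool) → ℝ) (y : Fin N → Bool) :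
    ∑ w : Fin N → Bool,
      (∑ x : Fin N → Bool, ∑ z : Fin N → Bool,
          ((1/2:ℝ)^N * ζ z) * (if (fun i => if z i then y i else x i) = w then 1 else 0)) ^ 2
    = (1/2:ℝ)^N * ∑ z : Fin N → Bool, ∑ z' : Fin N → Bool,
        ζ z * ζ z' * ∏ i, ((1:ℝ) + (if z i then (1:ℝ) else 0) * (if z' i then 1 else 0)) := by
  classical
  set c : ℝ := (1/2:ℝ)^N with hcdef
  set m : (Fin N → Bool) → (Fin N → Bool) → (Fin N → Bool) :=
    fun z x => fun i => if z i then y i else x i with hm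
  have hc : ∀ z z' : Fin N → Bool,
      c * ∏ i, (if z i ∧ z' i then (4:ℝ) else 2)
      = ∏ i, ((1:ℝ) + (if z i then (1:ℝ) else 0) * (if z' i then 1 else 0)) := by
    intro z z'
    have h2 : c = ∏ _i : Fin N, (1/2:ℝ) := by simp [hcdef]
    rw [h2, ← Finset.prod_mul_distrib]
    refine Finset.prod_congr rfl fun i _ => ?_
    cases z i <;> cases z' i <;> norm_num
  calc
    ∑ w : Fin N → Bool,
        (∑ x : Fin N → Bool, ∑ z : Fin N → Bool,
            (c * ζ z) * (if m z x = w then 1 else 0)) ^ 2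
      = ∑ w : Fin N → Bool, ∑ x : Fin N → Bool, ∑ x' : Fin N → Bool,
          ∑ z : Fin N → Bool, ∑ z' : Fin N → Bool,
            ((c * ζ z) * (if m z x = w then 1 else 0)) *
              ((c * ζ z') * (if m z' x' = w then 1 else 0)) := by
        refine Finset.sum_congr rfl fun w _ => ?_
        rw [sq, Finset.sum_mul_sum]
        exact Finset.sum_congr rfl fun x _ => Finset.sum_congr rfl fun x' _ =>
          Finset.sum_mul_sum _ _ _ _
    _ = ∑ x : Fin N → Bool, ∑ x' : Fin N → Bool,
          ∑ z : Fin N → Bool, ∑ z' : Fin N → Bool, ∑ w : Fin N → Bool,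
            ((c * ζ z) * (if m z x = w then 1 else 0)) *
              ((c * ζ z') * (if m z' x' = w then 1 else 0)) := by
        rw [Finset.sum_comm]
        refine Finset.sum_congr rfl fun x _ => ?_
        rw [Finset.sum_comm]
        refine Finset.sum_congr rfl fun x' _ => ?_
        rw [Finset.sum_comm]
        refine Finset.sum_congr rfl fun z _ => ?_
        rw [Finset.sum_comm]
    _ = ∑ x : Fin N → Bool, ∑ x' : Fin N → Bool,
          ∑ z : Fin N → Bool, ∑ z' : Fin N → Bool,
            ((c * ζ z) * (c * ζ z')) * (if m z x = m z' x' then 1 else 0) := by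
        refine Finset.sum_congr rfl fun x _ => Finset.sum_congr rfl fun x' _ =>
          Finset.sum_congr rfl fun z _ => Finset.sum_congr rfl fun z' _ => ?_
        have h3 : ∀ w : Fin N → Bool,
            ((c * ζ z) * (if m z x = w then 1 else 0)) *
              ((c * ζ z') * (if m z' x' = w then 1 else 0))
            = ((c * ζ z) * (c * ζ z')) *
                ((if m z x = w then (1:ℝ) else 0) * (if m z' x' = w then 1 else 0)) := by
          intro w; ring
        simp_rw [h3]
        rw [← Finset.mul_sum]
        congr 1
        simp [ite_zero_mul, Finset.sum_ite_eq]
    _ = ∑ x : Fin N → Bool, ∑ z : Fin N → Bool,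
          ∑ x' : Fin N → Bool, ∑ z' : Fin N → Bool,
            ((c * ζ z) * (c * ζ z')) * (if m z x = m z' x' then 1 else 0) :=
        Finset.sum_congr rfl fun x _ => Finset.sum_comm
    _ = ∑ z : Fin N → Bool, ∑ x : Fin N → Bool,
          ∑ x' : Fin N → Bool, ∑ z' : Fin N → Bool,
            ((c * ζ z) * (c * ζ z')) * (if m z x = m z' x' then 1 else 0) :=
        Finset.sum_comm
    _ = ∑ z : Fin N → Bool, ∑ x : Fin N → Bool,
          ∑ z' : Fin N → Bool, ∑ x' : Fin N → Bool,
            ((c * ζ z) * (c * ζ z')) * (if m z x = m z' x' then 1 else 0) :=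
        Finset.sum_congr rfl fun z _ => Finset.sum_congr rfl fun x _ => Finset.sum_comm
    _ = ∑ z : Fin N → Bool, ∑ z' : Fin N → Bool,
          ∑ x : Fin N → Bool, ∑ x' : Fin N → Bool,
            ((c * ζ z) * (c * ζ z')) * (if m z x = m z' x' then 1 else 0) :=
        Finset.sum_congr rfl fun z _ => Finset.sum_comm
    _ = ∑ z : Fin N → Bool, ∑ z' : Fin N → Bool,
          ((c * ζ z) * (c * ζ z')) *
            ∑ x : Fin N → Bool, ∑ x' : Fin N → Bool,
              (if m z x = m z' x' then (1:ℝ) else 0) := by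
        simp_rw [← Finset.mul_sum]
    _ = ∑ z : Fin N → Bool, ∑ z' : Fin N → Bool,
          ((c * ζ z) * (c * ζ z')) * ∏ i, (if z i ∧ z' i then (4:ℝ) else 2) := by
        refine Finset.sum_congr rfl fun z _ => Finset.sum_congr rfl fun z' _ => ?_
        congr 1
        rw [hm]
        exact pair_count_aux N y z z'
    _ = ∑ z : Fin N → Bool, ∑ z' : Fin N → Bool,
          c * (ζ z * ζ z' *
            ∏ i, ((1:ℝ) + (if z i then (1:ℝ) else 0) * (if z' i then 1 else 0))) := by
        refine Finset.sum_congr rfl fun z _ => Finset.sum_congr rfl fun z' _ => ?_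
        rw [← hc z z']; ring
    _ = (1/2:ℝ)^N * ∑ z : Fin N → Bool, ∑ z' : Fin N → Bool,
          ζ z * ζ z' * ∏ i, ((1:ℝ) + (if z i then (1:ℝ) else 0) * (if z' i then 1 else 0)) := by
        rw [← hcdef]
        simp_rw [Finset.mul_sum]

private lemma prod_one_add_aux {ι : Type*} [Fintype ι] [DecidableEq ι] (f : ι → ℝ) :
    ∏ i, ((1:ℝ) + f i) = ∑ t : Finset ι, ∏ i ∈ t, f i := by
  simp_rw [add_comm (1:ℝ)]
  rw [Fintype.prod_add]
  simp

/-- Salez's negative-dependence L² bound: let `X*_i` be i.i.d. Bernoulli(1/2),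
let `Z = (Z_i)` be a `{0,1}^N`-valued random vector with law `ζ`, independent of `X*`,
satisfying negative dependence, and let `y ∈ {0,1}^N` be fixed. With
`X_i = (1 - Z_i) X*_i + Z_i y_i`, the law `μ` of `(X_i)` and `π` uniform on `{0,1}^N`
satisfy `‖μ/π - 1‖²_{L²(π)} ≤ ∏ (1 + E[Z_i]²) - 1`. -/
theorem chi_square_le_of_negatively_dependent
    (N : ℕ) (ζ : (Fin N → Bool) → ℝ) (hζ0 : ∀ z, 0 ≤ ζ z) (hζ1 : ∑ z, ζ z = 1)
    (y : Fin N → Bool)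
    (hND : ∀ A : Finset (Fin N),
      ∑ z : Fin N → Bool, ζ z * ∏ i ∈ A, (if z i then (1 : ℝ) else 0) ≤
        ∏ i ∈ A, ∑ z : Fin N → Bool, ζ z * (if z i then (1 : ℝ) else 0)) :
    (∑ w : Fin N → Bool,
        (∑ x : Fin N → Bool, ∑ z : Fin N → Bool,
            ((1 / 2 : ℝ) ^ N * ζ z) *
              (if (fun i => if z i then y i else x i) = w then 1 else 0)) ^ 2 /
          ((1 / 2 : ℝ) ^ N)) - 1 ≤
      (∏ i : Fin N,
        (1 + (∑ z : Fin N → Bool, ζ z * (if z i then (1 : ℝ) else 0)) ^ 2)) - 1 := by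
  classical
  have hcne : ((1/2:ℝ)^N) ≠ 0 := by positivity
  refine sub_le_sub_right ?_ 1
  rw [← Finset.sum_div, key_identity N ζ y, mul_div_cancel_left₀ _ hcne]
  -- now bound D ≤ ∏ (1 + p i ^ 2)
  set p : Fin N → ℝ := fun i => ∑ z : Fin N → Bool, ζ z * (if z i then (1:ℝ) else 0) with hp
  have hp0 : ∀ i, 0 ≤ p i := fun i =>
    Finset.sum_nonneg fun z _ => mul_nonneg (hζ0 z) (by positivity)
  have hQ0 : ∀ A : Finset (Fin N),
      0 ≤ ∑ z : Fin N → Bool, ζ z * ∏ i ∈ A, (if z i then (1:ℝ) else 0) := fun A =>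
    Finset.sum_nonneg fun z _ => mul_nonneg (hζ0 z)
      (Finset.prod_nonneg fun i _ => by positivity)
  have hDQ : (∑ z : Fin N → Bool, ∑ z' : Fin N → Bool,
        ζ z * ζ z' * ∏ i, ((1:ℝ) + (if z i then (1:ℝ) else 0) * (if z' i then 1 else 0)))
      = ∑ A : Finset (Fin N),
          (∑ z : Fin N → Bool, ζ z * ∏ i ∈ A, (if z i then (1:ℝ) else 0)) *
            (∑ z' : Fin N → Bool, ζ z' * ∏ i ∈ A, (if z' i then (1:ℝ) else 0)) := by
    have h1 : ∀ z z' : Fin N → Bool,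
        ζ z * ζ z' * ∏ i, ((1:ℝ) + (if z i then (1:ℝ) else 0) * (if z' i then 1 else 0))
        = ∑ A : Finset (Fin N),
            (ζ z * ∏ i ∈ A, (if z i then (1:ℝ) else 0)) *
              (ζ z' * ∏ i ∈ A, (if z' i then (1:ℝ) else 0)) := by
      intro z z'
      rw [prod_one_add_aux, Finset.mul_sum]
      refine Finset.sum_congr rfl fun A _ => ?_
      rw [Finset.prod_mul_distrib]
      ring
    simp_rw [h1]
    calc
      ∑ z : Fin N → Bool, ∑ z' : Fin N → Bool, ∑ A : Finset (Fin N),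
          (ζ z * ∏ i ∈ A, (if z i then (1:ℝ) else 0)) *
            (ζ z' * ∏ i ∈ A, (if z' i then (1:ℝ) else 0))
        = ∑ z : Fin N → Bool, ∑ A : Finset (Fin N), ∑ z' : Fin N → Bool,
            (ζ z * ∏ i ∈ A, (if z i then (1:ℝ) else 0)) *
              (ζ z' * ∏ i ∈ A, (if z' i then (1:ℝ) else 0)) :=
          Finset.sum_congr rfl fun z _ => Finset.sum_comm
      _ = ∑ A : Finset (Fin N), ∑ z : Fin N → Bool, ∑ z' : Fin N → Bool,
            (ζ z * ∏ i ∈ A, (if z i then (1:ℝ) else 0)) *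
              (ζ z' * ∏ i ∈ A, (if z' i then (1:ℝ) else 0)) := Finset.sum_comm
      _ = ∑ A : Finset (Fin N),
            (∑ z : Fin N → Bool, ζ z * ∏ i ∈ A, (if z i then (1:ℝ) else 0)) *
              (∑ z' : Fin N → Bool, ζ z' * ∏ i ∈ A, (if z' i then (1:ℝ) else 0)) :=
          Finset.sum_congr rfl fun A _ => (Finset.sum_mul_sum _ _ _ _).symm
  rw [hDQ]
  calc
    ∑ A : Finset (Fin N),
        (∑ z : Fin N → Bool, ζ z * ∏ i ∈ A, (if z i then (1:ℝ) else 0)) *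
          (∑ z' : Fin N → Bool, ζ z' * ∏ i ∈ A, (if z' i then (1:ℝ) else 0))
      ≤ ∑ A : Finset (Fin N), (∏ i ∈ A, p i) * (∏ i ∈ A, p i) :=
        Finset.sum_le_sum fun A _ =>
          mul_le_mul (hND A) (hND A) (hQ0 A) (Finset.prod_nonneg fun i _ => hp0 i)
    _ = ∑ A : Finset (Fin N), ∏ i ∈ A, p i ^ 2 := by
        refine Finset.sum_congr rfl fun A _ => ?_
        rw [← Finset.prod_mul_distrib]
        exact Finset.prod_congr rfl fun i _ => (sq (p i)).symm
    _ = ∏ i : Fin N, (1 + p i ^ 2) := (prod_one_add_aux _).symm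
end

section
/- Let 0 < α < 1, β ∈ (1/2, 1), t⁻ = ((2β−1)/(2α)) log N − C/α with C > 0, m = ⌈N^β⌉, p = (1 − e^{−α t⁻})/2. Then N/2 − (m p + (N−m)(1 − e^{−t⁻})/2) ≥ (1/2) m N^{(1/2) − β} e^C ≥ (1/4)√N e^C for all sufficiently large N. -/
/-- Bias of the observed statistic just before the delayed cutoff time: with
`t⁻ = ((2β-1)/(2α)) log N - C/α`, `m = ⌈N^β⌉`, `p = (1 - e^{-α t⁻})/2`,
`q = (1 - e^{-t⁻})/2`, one has, for all large `N`,
`N/2 - (m p + (N - m) q) ≥ (1/2) m N^{1/2-β} e^C ≥ (1/4) √N e^C`. -/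
theorem delayed_cutoff_bias
    (α β C : ℝ) (hα0 : 0 < α) (hα1 : α < 1)
    (hβ1 : 1 / 2 < β) (hβ2 : β < 1) (hC : 0 < C) :
    ∃ N0 : ℕ, ∀ N : ℕ, N0 ≤ N →
      (N : ℝ) / 2 -
          ((⌈(N : ℝ) ^ β⌉₊ : ℝ) *
              ((1 - Real.exp (-(α * (((2 * β - 1) / (2 * α)) * Real.log N - C / α)))) / 2) +
            ((N : ℝ) - (⌈(N : ℝ) ^ β⌉₊ : ℝ)) *
              ((1 - Real.exp (-(((2 * β - 1) / (2 * α)) * Real.log N - C / α))) / 2)) ≥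
        (1 / 2) * (⌈(N : ℝ) ^ β⌉₊ : ℝ) * (N : ℝ) ^ (1 / 2 - β) * Real.exp C ∧
      (1 / 2) * (⌈(N : ℝ) ^ β⌉₊ : ℝ) * (N : ℝ) ^ (1 / 2 - β) * Real.exp C ≥
        (1 / 4) * Real.sqrt N * Real.exp C := by
  refine ⟨1, fun N hN => ?_⟩
  have hN1 : (1 : ℝ) ≤ (N : ℝ) := by exact_mod_cast hN
  have hN0 : (0 : ℝ) < (N : ℝ) := by linarith
  set t : ℝ := ((2 * β - 1) / (2 * α)) * Real.log N - C / α with ht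
  set m : ℝ := (⌈(N : ℝ) ^ β⌉₊ : ℝ) with hm
  have hαt : α * t = ((2 * β - 1) / 2) * Real.log N - C := by
    rw [ht]; field_simp
  have hE : Real.exp (-(α * t)) = (N : ℝ) ^ (1 / 2 - β) * Real.exp C := by
    rw [Real.rpow_def_of_pos hN0, ← Real.exp_add, hαt]
    ring_nf
  have hmb : (N : ℝ) ^ β ≤ m := Nat.le_ceil _
  have hmN : m ≤ (N : ℝ) := by
    rw [hm]
    have : (⌈(N : ℝ) ^ β⌉₊ : ℕ) ≤ N := by
      apply Nat.ceil_le.mpr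
      calc (N : ℝ) ^ β ≤ (N : ℝ) ^ (1 : ℝ) :=
            Real.rpow_le_rpow_of_exponent_le hN1 (le_of_lt hβ2)
        _ = (N : ℝ) := Real.rpow_one _
    exact_mod_cast this
  constructor
  · rw [hE]
    nlinarith [mul_nonneg (sub_nonneg.mpr hmN) (Real.exp_nonneg (-t)),
      Real.exp_nonneg (-t)]
  · have hsq : Real.sqrt N = (N : ℝ) ^ ((1 : ℝ) / 2) := Real.sqrt_eq_rpow N
    have hmul : (N : ℝ) ^ β * (N : ℝ) ^ (1 / 2 - β) = (N : ℝ) ^ ((1 : ℝ) / 2) := by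
      rw [← Real.rpow_add hN0]; ring_nf
    have hpos : (0 : ℝ) < (N : ℝ) ^ (1 / 2 - β) := Real.rpow_pos_of_pos hN0 _
    have hkey : Real.sqrt N ≤ m * (N : ℝ) ^ (1 / 2 - β) := by
      rw [hsq, ← hmul]
      exact mul_le_mul_of_nonneg_right hmb (le_of_lt hpos)
    nlinarith [Real.exp_pos C, Real.sqrt_nonneg (N : ℝ)]
end
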